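/- Let X be a measurable space, θ, θ' ∈ [0,1] with θ > θ', and let ℓ_sym be a measurable symmetric loss with constant K > 0 taking values in [0,K]. Let G be a nonempty class of measurable functions g : X → ℝ. Suppose g* ∈ G minimizes the clean AUC risk R_AUC^{ℓ_sym} over G. Then g* also minimizes the corrupted AUC risk R_corr^{ℓ_sym} over G, and conversely any minimizer of R_corr^{ℓ_sym} over G minimizes R_AUC^{ℓ_sym} over G; i.e., since R_corr^{ℓ_sym}(g) = (θ − θ')·R_AUC^{ℓ_sym}(g) + K(1 − θ + θ')/2 with θ − θ' > 0, the sets of minimizers of the two risks over G coincide. -/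

import Mathlib

open MeasureTheory

/-- The corrupted (mixture) distribution `θ·P + (1−θ)·N`. -/
noncomputable def mix {X : Type*} [MeasurableSpace X] (P N : Measure X) (θ : ℝ) : Measure X :=
  ENNReal.ofReal θ • P + ENNReal.ofReal (1 - θ) • N

/-- The clean AUC risk `R_AUC^ℓ(g) = E_{x~P} E_{x'~N} [ℓ(g x − g x')]`. -/
noncomputable def aucRisk {X : Type*} [MeasurableSpace X] (P N : Measure X)
    (ℓ : ℝ → ℝ) (g : X → ℝ) : ℝ :=
  ∫ x, ∫ x', ℓ (g x - g x') ∂N ∂P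

/-- The corrupted AUC risk `R_corr^ℓ(g) = E_{x~p_θ} E_{x'~p_θ'} [ℓ(g x − g x')]`. -/
noncomputable def corrRisk {X : Type*} [MeasurableSpace X] (P N : Measure X)
    (θ θ' : ℝ) (ℓ : ℝ → ℝ) (g : X → ℝ) : ℝ :=
  ∫ x, ∫ x', ℓ (g x - g x') ∂(mix P N θ') ∂(mix P N θ)

/-! Both risks are double integrals of the kernel `(x, x') ↦ ℓ (g x - g x')`, and such a double
integral is affine in each of the two mixtures. Expanding the corrupted risk gives the four
double integrals over `P`/`N` pairs; symmetry of `ℓ` makes `P`-`P` and `N`-`N` equal to `K / 2` and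
`N`-`P` equal to `K` minus the clean risk. So the corrupted risk is
`(θ - θ') * aucRisk + K * (1 - θ + θ') / 2`, a strictly increasing function of the clean risk. -/

instance isFiniteMeasure_mix {X : Type*} [MeasurableSpace X] {P N : Measure X}
    [IsFiniteMeasure P] [IsFiniteMeasure N] {θ : ℝ} : IsFiniteMeasure (mix P N θ) :=
  haveI := P.smul_finite (ENNReal.ofReal_ne_top (r := θ))
  haveI := N.smul_finite (ENNReal.ofReal_ne_top (r := 1 - θ))
  inferInstanceAs (IsFiniteMeasure (_ + _))

theorem integral_mix {X : Type*} [MeasurableSpace X] {P N : Measure X} {θ : ℝ}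
    (hθ : θ ∈ Set.Icc (0 : ℝ) 1) {f : X → ℝ} (hfP : Integrable f P) (hfN : Integrable f N) :
    ∫ x, f x ∂(mix P N θ) = θ * ∫ x, f x ∂P + (1 - θ) * ∫ x, f x ∂N := by
  rw [mix, integral_add_measure (hfP.smul_measure ENNReal.ofReal_ne_top)
      (hfN.smul_measure ENNReal.ofReal_ne_top), integral_smul_measure, integral_smul_measure,
    ENNReal.toReal_ofReal hθ.1, ENNReal.toReal_ofReal (sub_nonneg.2 hθ.2), smul_eq_mul,
    smul_eq_mul]

section BoundedKernel

variable {X : Type*} [MeasurableSpace X] {k : X → X → ℝ} {C : ℝ}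

theorem integrable_kernel_of_bound (hk : Measurable (Function.uncurry k))
    (hC : ∀ x y, ‖k x y‖ ≤ C) (x : X) (ν : Measure X) [IsFiniteMeasure ν] :
    Integrable (k x) ν :=
  .of_bound (hk.comp measurable_prodMk_left).aestronglyMeasurable C (.of_forall (hC x))

theorem integrable_integral_kernel_of_bound (hk : Measurable (Function.uncurry k))
    (hC : ∀ x y, ‖k x y‖ ≤ C) (μ ν : Measure X) [IsFiniteMeasure μ] [IsFiniteMeasure ν] :
    Integrable (fun x ↦ ∫ y, k x y ∂ν) μ :=
  .of_bound hk.stronglyMeasurable.integral_prod_right'.aestronglyMeasurable (C * ν.real Set.univ)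
    (.of_forall fun x ↦ norm_integral_le_of_norm_le_const (.of_forall (hC x)))

theorem integral_integral_mix_left (hk : Measurable (Function.uncurry k))
    (hC : ∀ x y, ‖k x y‖ ≤ C) {P N : Measure X} [IsFiniteMeasure P] [IsFiniteMeasure N]
    {θ : ℝ} (hθ : θ ∈ Set.Icc (0 : ℝ) 1) (ν : Measure X) [IsFiniteMeasure ν] :
    ∫ x, ∫ y, k x y ∂ν ∂(mix P N θ) =
      θ * ∫ x, ∫ y, k x y ∂ν ∂P + (1 - θ) * ∫ x, ∫ y, k x y ∂ν ∂N :=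
  integral_mix hθ (integrable_integral_kernel_of_bound hk hC P ν)
    (integrable_integral_kernel_of_bound hk hC N ν)

theorem integral_integral_mix_right (hk : Measurable (Function.uncurry k))
    (hC : ∀ x y, ‖k x y‖ ≤ C) {P N : Measure X} [IsFiniteMeasure P] [IsFiniteMeasure N]
    {θ : ℝ} (hθ : θ ∈ Set.Icc (0 : ℝ) 1) (μ : Measure X) [IsFiniteMeasure μ] :
    ∫ x, ∫ y, k x y ∂(mix P N θ) ∂μ =
      θ * ∫ x, ∫ y, k x y ∂P ∂μ + (1 - θ) * ∫ x, ∫ y, k x y ∂N ∂μ := by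
  have hP := integrable_integral_kernel_of_bound hk hC μ P
  have hN := integrable_integral_kernel_of_bound hk hC μ N
  rw [← integral_const_mul, ← integral_const_mul, ← integral_add (hP.const_mul θ)
    (hN.const_mul (1 - θ))]
  exact integral_congr_ae <| .of_forall fun x ↦
    integral_mix hθ (integrable_kernel_of_bound hk hC x P) (integrable_kernel_of_bound hk hC x N)

theorem integral_integral_add_integral_integral_swap (hk : Measurable (Function.uncurry k))
    (hC : ∀ x y, ‖k x y‖ ≤ C) {K : ℝ} (hsym : ∀ x y, k x y + k y x = K)
    (μ ν : Measure X) [IsProbabilityMeasure μ] [IsProbabilityMeasure ν] :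
    ∫ x, ∫ y, k x y ∂ν ∂μ + ∫ x, ∫ y, k x y ∂μ ∂ν = K := by
  have hkT : Measurable (Function.uncurry (flip k)) := hk.comp measurable_swap
  have hCT : ∀ x y, ‖flip k x y‖ ≤ C := fun x y ↦ hC y x
  have hFubini : ∫ x, ∫ y, k x y ∂μ ∂ν = ∫ x, ∫ y, flip k x y ∂ν ∂μ :=
    integral_integral_swap (.of_bound hk.aestronglyMeasurable C (.of_forall fun _ ↦ hC _ _))
  have hinner : ∀ x, ∫ y, k x y ∂ν + ∫ y, flip k x y ∂ν = K := fun x ↦ by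
    rw [← integral_add (integrable_kernel_of_bound hk hC x ν)
      (integrable_kernel_of_bound hkT hCT x ν)]
    simp [flip, hsym]
  rw [hFubini, ← integral_add (integrable_integral_kernel_of_bound hk hC μ ν)
    (integrable_integral_kernel_of_bound hkT hCT μ ν)]
  simp [hinner]

theorem integral_integral_self_eq_half (hk : Measurable (Function.uncurry k))
    (hC : ∀ x y, ‖k x y‖ ≤ C) {K : ℝ} (hsym : ∀ x y, k x y + k y x = K)
    (μ : Measure X) [IsProbabilityMeasure μ] :
    ∫ x, ∫ y, k x y ∂μ ∂μ = K / 2 := by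
  linarith [integral_integral_add_integral_integral_swap hk hC hsym μ μ]

end BoundedKernel

theorem corrRisk_eq_affine_aucRisk {X : Type*} [MeasurableSpace X] (P N : Measure X)
    [IsProbabilityMeasure P] [IsProbabilityMeasure N] {θ θ' : ℝ}
    (hθ : θ ∈ Set.Icc (0 : ℝ) 1) (hθ' : θ' ∈ Set.Icc (0 : ℝ) 1)
    {ℓ : ℝ → ℝ} (hℓ : Measurable ℓ) {K C : ℝ} (hsym : ∀ z, ℓ z + ℓ (-z) = K)
    (hC : ∀ z, ‖ℓ z‖ ≤ C) {g : X → ℝ} (hg : Measurable g) :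
    corrRisk P N θ θ' ℓ g = (θ - θ') * aucRisk P N ℓ g + K * (1 - θ + θ') / 2 := by
  set k : X → X → ℝ := fun x y ↦ ℓ (g x - g y)
  have hk : Measurable (Function.uncurry k) :=
    hℓ.comp ((hg.comp measurable_fst).sub (hg.comp measurable_snd))
  have hkC : ∀ x y, ‖k x y‖ ≤ C := fun x y ↦ hC _
  have hksym : ∀ x y, k x y + k y x = K := fun x y ↦ by
    simpa only [k, neg_sub] using hsym (g x - g y)
  have hPN := integral_integral_add_integral_integral_swap hk hkC hksym P N
  have hPP := integral_integral_self_eq_half hk hkC hksym P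
  have hNN := integral_integral_self_eq_half hk hkC hksym N
  have hexpand : corrRisk P N θ θ' ℓ g =
      θ * (θ' * ∫ x, ∫ y, k x y ∂P ∂P + (1 - θ') * ∫ x, ∫ y, k x y ∂N ∂P) +
        (1 - θ) * (θ' * ∫ x, ∫ y, k x y ∂P ∂N + (1 - θ') * ∫ x, ∫ y, k x y ∂N ∂N) := by
    rw [corrRisk, integral_integral_mix_left hk hkC hθ,
      integral_integral_mix_right hk hkC hθ', integral_integral_mix_right hk hkC hθ']
  rw [hexpand, hPP, hNN, eq_sub_of_add_eq' hPN, aucRisk]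
  ring

theorem clean_and_corrupted_auc_minimizers_coincide_general
    {X : Type*} [MeasurableSpace X] (P N : Measure X)
    [IsProbabilityMeasure P] [IsProbabilityMeasure N]
    (θ θ' : ℝ) (hθ : θ ∈ Set.Icc (0 : ℝ) 1) (hθ' : θ' ∈ Set.Icc (0 : ℝ) 1)
    (hθθ' : θ' < θ)
    (ℓ : ℝ → ℝ) (hℓ : Measurable ℓ) (K : ℝ)
    (hsym : ∀ z : ℝ, ℓ z + ℓ (-z) = K)
    (hbound : ∀ z : ℝ, ℓ z ∈ Set.Icc (0 : ℝ) K)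
    (G : Set (X → ℝ)) (hGmeas : ∀ g ∈ G, Measurable g) :
    ∀ h ∈ G,
      ((∀ g ∈ G, aucRisk P N ℓ h ≤ aucRisk P N ℓ g) ↔
        (∀ g ∈ G, corrRisk P N θ θ' ℓ h ≤ corrRisk P N θ θ' ℓ g)) := by
  have hC : ∀ z, ‖ℓ z‖ ≤ K := fun z ↦ by
    rw [Real.norm_of_nonneg (hbound z).1]; exact (hbound z).2
  have haffine : ∀ g ∈ G,
      corrRisk P N θ θ' ℓ g = (θ - θ') * aucRisk P N ℓ g + K * (1 - θ + θ') / 2 :=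
    fun g hg ↦ corrRisk_eq_affine_aucRisk P N hθ hθ' hℓ hsym hC (hGmeas g hg)
  have hmono : StrictMono fun r : ℝ ↦ (θ - θ') * r + K * (1 - θ + θ') / 2 :=
    fun _ _ hab ↦ add_lt_add_left (mul_lt_mul_of_pos_left hab (sub_pos.2 hθθ')) _
  intro h hh
  refine forall₂_congr fun g hg ↦ ?_
  rw [haffine h hh, haffine g hg]
  exact hmono.le_iff_le.symm

/-- For a symmetric loss bounded in `[0,K]` and `θ > θ'`, the minimizers over `G` of the
clean AUC risk and of the corrupted AUC risk coincide: a hypothesis `h ∈ G` minimizes the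
clean AUC risk over `G` if and only if it minimizes the corrupted AUC risk over `G`. -/
theorem clean_and_corrupted_auc_minimizers_coincide
    {X : Type*} [MeasurableSpace X] (P N : Measure X)
    [IsProbabilityMeasure P] [IsProbabilityMeasure N]
    (θ θ' : ℝ) (hθ : θ ∈ Set.Icc (0 : ℝ) 1) (hθ' : θ' ∈ Set.Icc (0 : ℝ) 1)
    (hθθ' : θ' < θ)
    (ℓ : ℝ → ℝ) (hℓ : Measurable ℓ) (K : ℝ) (hK : 0 < K)
    (hsym : ∀ z : ℝ, ℓ z + ℓ (-z) = K)
    (hbound : ∀ z : ℝ, ℓ z ∈ Set.Icc (0 : ℝ) K)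
    (G : Set (X → ℝ)) (hGne : G.Nonempty) (hGmeas : ∀ g ∈ G, Measurable g) :
    ∀ h ∈ G,
      ((∀ g ∈ G, aucRisk P N ℓ h ≤ aucRisk P N ℓ g) ↔
        (∀ g ∈ G, corrRisk P N θ θ' ℓ h ≤ corrRisk P N θ θ' ℓ g)) :=
  clean_and_corrupted_auc_minimizers_coincide_general P N θ θ' hθ hθ' hθθ' ℓ hℓ K hsym hbound G
    hGmeas
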